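/- Let w₁, w₂, w₃ > 0 with w₂w₃e^γ > 0 and define c(t) = w₁ − w₂e^{−w₃eᵗ} − e^{t−γ} for t ∈ ℝ, where γ ∈ ℝ. If w₂w₃eᵞ > 1, then c attains its maximum at the unique t* satisfying w₂w₃e^{t*}e^{−w₃e^{t*}} = e^{t*−γ}, i.e. e^{w₃e^{t*}} = w₂w₃eᵞ, and the maximum value is c(t*) = w₁ − (1 + ln(w₂w₃eᵞ))/(w₃eᵞ). -/

import Mathlib

open Real

/-- Peak of the current-shares trajectory `c t = w₁ − w₂ e^{−w₃ eᵗ} − e^{t−γ}`: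
it is attained at the unique `t*` with `e^{w₃ e^{t*}} = w₂ w₃ eᵞ`, and the peak
value is `w₁ − (1 + ln (w₂ w₃ eᵞ))/(w₃ eᵞ)`. -/
theorem stmt_2 (w₁ w₂ w₃ γ : ℝ) (h₁ : 0 < w₁) (h₂ : 0 < w₂) (h₃ : 0 < w₃)
    (hbig : 1 < w₂ * w₃ * exp γ)
    (c : ℝ → ℝ) (hc : ∀ t, c t = w₁ - w₂ * exp (-(w₃ * exp t)) - exp (t - γ)) :
    ∃ tstar : ℝ,
      exp (w₃ * exp tstar) = w₂ * w₃ * exp γ ∧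
      (∀ t' : ℝ, exp (w₃ * exp t') = w₂ * w₃ * exp γ → t' = tstar) ∧
      (∀ t : ℝ, c t ≤ c tstar) ∧
      c tstar = w₁ - (1 + log (w₂ * w₃ * exp γ)) / (w₃ * exp γ) := by
  set L : ℝ := log (w₂ * w₃ * exp γ) with hLdef
  have hpos : 0 < w₂ * w₃ * exp γ := lt_trans one_pos hbig
  have hL : exp L = w₂ * w₃ * exp γ := exp_log hpos
  have hLpos : 0 < L := log_pos hbig
  have hK : 0 < w₃ * exp γ := mul_pos h₃ (exp_pos γ)
  refine ⟨log (L / w₃), ?_, ?_, ?_, ?_⟩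
  · rw [exp_log (div_pos hLpos h₃)]
    rw [mul_div_cancel₀ _ (ne_of_gt h₃)]
    exact hL
  · intro t' ht'
    have : w₃ * exp t' = L := by
      have := exp_injective (ht'.trans hL.symm)
      exact this
    have het : exp t' = L / w₃ := by field_simp at this ⊢; linarith
    rw [← het, log_exp]
  · intro t
    rw [hc t, hc (log (L / w₃))]
    have hes : exp (log (L / w₃)) = L / w₃ := exp_log (div_pos hLpos h₃)
    have h1 : w₃ * exp (log (L / w₃)) = L := by
      rw [hes, mul_div_cancel₀ _ (ne_of_gt h₃)]
    rw [h1]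
    have h2 : exp (log (L / w₃) - γ) = L / (w₃ * exp γ) := by
      rw [exp_sub, hes, div_div]
    rw [h2]
    have h3 : w₂ * exp (-L) = 1 / (w₃ * exp γ) := by
      rw [exp_neg, hL]
      field_simp
    rw [h3]
    -- goal: w₁ - w₂ exp(-(w₃ e^t)) - exp(t-γ) ≤ w₁ - 1/K - L/K
    set u : ℝ := w₃ * exp t with hu
    have hut : exp (t - γ) = u / (w₃ * exp γ) := by
      rw [exp_sub, hu]
      field_simp
    rw [hut]
    have key : exp (L - u) ≥ 1 + (L - u) := by
      have := add_one_le_exp (L - u)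
      linarith
    have hw2 : w₂ * exp (-u) = exp (L - u) / (w₃ * exp γ) := by
      rw [exp_sub, hL, exp_neg]
      field_simp
    rw [hw2]
    rw [sub_sub, sub_sub, sub_le_sub_iff_left, ← add_div, ← add_div,
      div_le_div_iff₀ hK hK]
    nlinarith [hK, key]
  · rw [hc]
    have hes : exp (log (L / w₃)) = L / w₃ := exp_log (div_pos hLpos h₃)
    have h1 : w₃ * exp (log (L / w₃)) = L := by
      rw [hes, mul_div_cancel₀ _ (ne_of_gt h₃)]
    rw [h1]
    have h2 : exp (log (L / w₃) - γ) = L / (w₃ * exp γ) := by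
      rw [exp_sub, hes, div_div]
    rw [h2, exp_neg, hL]
    field_simp
    ring
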